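/- Transposition preserves q-gram multisets for q=2: for a character pair setting with z₁, z₂ single characters and strings x₁,...,x₅, the strings x₁ z₁ x₂ z₂ x₃ z₁ x₄ z₂ x₅ and x₁ z₁ x₄ z₂ x₃ z₁ x₂ z₂ x₅ have the same multiset of bigrams. -/

import Mathlib

/-!
Cut the delimited string at the four marked occurrences `z₁, z₂, z₁, z₂`, keeping each cut
character at the end of one piece and the start of the next. Every bigram lies in exactly one of
the five overlapping pieces `$x₁z₁`, `z₁x₂z₂`, `z₂x₃z₁`, `z₁x₄z₂`, `z₂x₅$`, and the transposition
only exchanges the two pieces `z₁x₂z₂` and `z₁x₄z₂`, which have the same end characters.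
-/

/-- The multiset of bigrams (length-2 contiguous substrings) of a list. -/
def bigrams {β : Type*} (l : List β) : Multiset (β × β) :=
  (l.zip l.tail : List (β × β))

/-- The delimited form `$w$` of a string `w` over `α`, with `none` as the delimiter. -/
def delim {α : Type*} (w : List α) : List (Option α) :=
  none :: (w.map some ++ [none])

/-- The bigram encoding of a string: the multiset of bigrams of its delimited form. -/
def Phi {α : Type*} (w : List α) : Multiset (Option α × Option α) :=
  bigrams (delim w)

/-- A string is uniquely decodable if it is the only string with its bigram encoding. -/
def UD {α : Type*} (w : List α) : Prop :=
  ∀ w' : List α, Phi w' = Phi w → w' = w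

section Bigrams

variable {β : Type*}

lemma bigrams_cons_cons (a b : β) (l : List β) :
    bigrams (a :: b :: l) = (a, b) ::ₘ bigrams (b :: l) := rfl

lemma bigrams_append_cons (c : β) : ∀ u v : List β,
    bigrams (u ++ c :: v) = bigrams (u ++ [c]) + bigrams (c :: v)
  | [], v => by simp [bigrams]
  | [a], v => by simp [bigrams]
  | a :: b :: u, v => by
      simp only [List.cons_append, bigrams_cons_cons]
      rw [← List.cons_append, bigrams_append_cons c (b :: u) v, Multiset.cons_add,
        List.cons_append]

lemma bigrams_four_cuts (a b : β) (A B C D E : List β) :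
    bigrams (A ++ a :: (B ++ b :: (C ++ a :: (D ++ b :: E)))) =
      bigrams (A ++ [a]) + bigrams (a :: B ++ [b]) + bigrams (b :: C ++ [a])
        + bigrams (a :: D ++ [b]) + bigrams (b :: E) := by
  rw [bigrams_append_cons a A, ← List.cons_append, bigrams_append_cons b (a :: B),
    ← List.cons_append, bigrams_append_cons a (b :: C), ← List.cons_append,
    bigrams_append_cons b (a :: D)]
  abel

lemma bigrams_swap_segments (a b : β) (A B C D E : List β) :
    bigrams (A ++ a :: (B ++ b :: (C ++ a :: (D ++ b :: E)))) =
      bigrams (A ++ a :: (D ++ b :: (C ++ a :: (B ++ b :: E)))) := by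
  rw [bigrams_four_cuts, bigrams_four_cuts]
  abel

end Bigrams

theorem transposition_preserves_bigrams {α : Type*} (z₁ z₂ : α) (x₁ x₂ x₃ x₄ x₅ : List α) :
    Phi (x₁ ++ [z₁] ++ x₂ ++ [z₂] ++ x₃ ++ [z₁] ++ x₄ ++ [z₂] ++ x₅)
      = Phi (x₁ ++ [z₁] ++ x₄ ++ [z₂] ++ x₃ ++ [z₁] ++ x₂ ++ [z₂] ++ x₅) := by
  have := bigrams_swap_segments (some z₁) (some z₂) (none :: x₁.map some) (x₂.map some)
    (x₃.map some) (x₄.map some) (x₅.map some ++ [none])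
  simpa only [Phi, delim, List.map_append, List.map_cons, List.map_nil, List.append_assoc,
    List.cons_append, List.nil_append] using this
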